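/- The homomorphic rewrite relation on the message algebra is strongly normalizing: there is no infinite sequence of messages m₀ → m₁ → m₂ → ⋯ where each step is a homomorphic rewrite; equivalently, the converse of the one-step rewrite relation is well-founded. -/

import Mathlib

/-- Messages: the free term algebra generated by atoms under pairing and
encryption with atomic keys. -/
inductive Msg (A : Type) : Type
  | atom : A → Msg A
  | pair : Msg A → Msg A → Msg A
  | enc : Msg A → A → Msg A

/-- The homomorphic rewrite relation: smallest relation containing every
instance of `{m·m'}_k → {m}_k·{m'}_k` and closed under contexts. -/
inductive Rw {A : Type} : Msg A → Msg A → Prop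
  | homo (m m' : Msg A) (k : A) :
      Rw (.enc (.pair m m') k) (.pair (.enc m k) (.enc m' k))
  | pairL {m m' : Msg A} (n : Msg A) : Rw m m' → Rw (.pair m n) (.pair m' n)
  | pairR {m m' : Msg A} (n : Msg A) : Rw m m' → Rw (.pair n m) (.pair n m')
  | enc {m m' : Msg A} (k : A) : Rw m m' → Rw (.enc m k) (.enc m' k)

/-- A polynomial interpretation: pairing adds one and encryption doubles, so the homomorphic
rule turns weight `2(a + b + 1)` into `2a + 2b + 1`. -/
def Msg.weight {A : Type} : Msg A → ℕ
  | .atom _ => 1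
  | .pair m n => m.weight + n.weight + 1
  | .enc m _ => 2 * m.weight

theorem Rw.weight_lt {A : Type} {m m' : Msg A} (h : Rw m m') : m'.weight < m.weight := by
  induction h <;> simp only [Msg.weight] <;> omega

theorem homomorphic_rewrite_strongly_normalizing_general
    (A : Type) :
    WellFounded (fun m m' : Msg A => Rw m' m) :=
  Subrelation.wf (fun h => h.weight_lt) (measure Msg.weight).wf

/-- The homomorphic rewrite relation is strongly normalizing:
the converse of the one-step rewrite relation is well-founded. -/
theorem homomorphic_rewrite_strongly_normalizing
    (A : Type) [Countable A] :
    WellFounded (fun m m' : Msg A => Rw m' m) :=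
  homomorphic_rewrite_strongly_normalizing_general A
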